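/- arXiv:quant-ph/0010076 — 2 statements merged into one kernel-verified Lean document; each statement's English description precedes it below -/
import Mathlib

section
/- Let E be a finite group with E' ⊆ Z(E) and cyclic center Z(E). If φ ∈ Irr(E) is faithful, then the inertia group in E of any irreducible constituent χ of φ↓N, for N ⊴ E, equals the inertia group of the linear character φ_Z of Z(N) defined by χ↓Z(N) = χ(1)·φ_Z; in particular T(χ) = T(φ_Z) = C_E(Z(N)). -/
open scoped BigOperators

/-- A representation is irreducible if it is nonzero and has no proper nontrivial
invariant subspaces. -/
def RepIrreducible {G V : Type*} [Monoid G] [AddCommGroup V] [Module ℂ V]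
    (ρ : Representation ℂ G V) : Prop :=
  (⊤ : Submodule ℂ V) ≠ ⊥ ∧
    ∀ U : Submodule ℂ V, (∀ g v, v ∈ U → ρ g v ∈ U) → U = ⊥ ∨ U = ⊤

/-- The character of a representation. -/
noncomputable def repChar {G V : Type*} [Monoid G] [AddCommGroup V] [Module ℂ V]
    (ρ : Representation ℂ G V) (g : G) : ℂ := LinearMap.trace ℂ V (ρ g)

/-- Conjugation by `g ∈ E` as an automorphism of a normal subgroup `N`. -/
def conjHom {E : Type*} [Group E] (N : Subgroup E) [hN : N.Normal] (g : E) : ↥N →* ↥N where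
  toFun x := ⟨g * ↑x * g⁻¹, hN.conj_mem _ x.2 g⟩
  map_one' := by ext; simp
  map_mul' a b := by ext; push_cast; group

/-! Since `E' ≤ Z(E)`, conjugation by `g` sends `x ∈ N` to `⁅g, x⁆ * x` with
`⁅g, x⁆ ∈ N ∩ Z(E) ≤ Z(N)`, and by Schur's lemma `χ(⁅g, x⁆ * x) = φ_Z(⁅g, x⁆) χ(x)`.
Comparing central characters in `⟨χ, φ↓N⟩ ≠ 0` shows that `φ_Z` agrees on `N ∩ Z(E)` with the
central character of the faithful `φ`, so it is injective there. Hence `g` fixes a value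
`χ(x) ≠ 0` only if `g` commutes with `x`: inside `N` this shows that `χ` vanishes off `Z(N)`,
and then `g` fixes `χ`, or `φ_Z`, exactly when it centralizes `Z(N)`. -/

namespace RepIrreducible

variable {G V : Type*} [AddCommGroup V] [Module ℂ V]

theorem nontrivial [Monoid G] {τ : Representation ℂ G V} (hτ : RepIrreducible τ) :
    Nontrivial V := by
  rw [← not_subsingleton_iff_nontrivial]
  exact fun _ => hτ.1 (Subsingleton.elim _ _)

variable [FiniteDimensional ℂ V]

theorem repChar_one_ne_zero [Monoid G] {τ : Representation ℂ G V} (hτ : RepIrreducible τ) :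
    repChar τ 1 ≠ 0 := by
  have := hτ.nontrivial
  rw [repChar, map_one, LinearMap.trace_one]
  exact_mod_cast Module.finrank_pos.ne'

theorem exists_eq_smul_one_of_commute [Monoid G] {τ : Representation ℂ G V}
    (hτ : RepIrreducible τ) {c : G} (hc : ∀ g, Commute c g) : ∃ μ : ℂ, τ c = μ • 1 := by
  have := hτ.nontrivial
  obtain ⟨μ, hμ⟩ := Module.End.exists_eigenvalue (τ c)
  have hstable : ∀ g v, v ∈ Module.End.eigenspace (τ c) μ →
      τ g v ∈ Module.End.eigenspace (τ c) μ := by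
    intro g v hv
    rw [Module.End.mem_eigenspace_iff] at hv ⊢
    rw [← Module.End.mul_apply, ← map_mul, (hc g).eq, map_mul, Module.End.mul_apply, hv,
      map_smul]
  refine ⟨μ, LinearMap.ext fun v => ?_⟩
  have hv : v ∈ Module.End.eigenspace (τ c) μ :=
    (hτ.2 _ hstable).resolve_left hμ ▸ Submodule.mem_top
  exact Module.End.mem_eigenspace_iff.mp hv

end RepIrreducible

section Scalar

variable {G V : Type*} [Monoid G] [AddCommGroup V] [Module ℂ V]
  {τ : Representation ℂ G V} {c : G} {μ : ℂ}

theorem repChar_mul_of_eq_smul_one (h : τ c = μ • 1) (x : G) :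
    repChar τ (c * x) = μ * repChar τ x := by
  rw [repChar, map_mul, h, smul_mul_assoc, one_mul, map_smul, smul_eq_mul, repChar]

theorem repChar_mul_of_eq_smul_one' (h : τ c = μ • 1) (x : G) :
    repChar τ (x * c) = μ * repChar τ x := by
  rw [repChar, map_mul, h, mul_smul_comm, mul_one, map_smul, smul_eq_mul, repChar]

end Scalar

theorem repChar_conj {G V : Type*} [Group G] [AddCommGroup V] [Module ℂ V]
    [FiniteDimensional ℂ V] (τ : Representation ℂ G V) (g x : G) :
    repChar τ (g * x * g⁻¹) = repChar τ x := by
  rw [repChar, repChar, map_mul, LinearMap.trace_mul_comm, ← map_mul, inv_mul_cancel_left]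

namespace RepIrreducible

variable {G V : Type*} [Group G] [AddCommGroup V] [Module ℂ V] [FiniteDimensional ℂ V]
  {τ : Representation ℂ G V} {c : G}

theorem eq_smul_one_of_mem_center (hτ : RepIrreducible τ) (hc : c ∈ Subgroup.center G) :
    τ c = (repChar τ c / repChar τ 1) • 1 := by
  obtain ⟨μ, hμ⟩ := hτ.exists_eq_smul_one_of_commute fun g =>
    (Subgroup.mem_center_iff.mp hc g).symm
  have hc1 : repChar τ c = μ * repChar τ 1 := by
    simpa using repChar_mul_of_eq_smul_one hμ 1
  rwa [hc1, mul_div_cancel_right₀ _ hτ.repChar_one_ne_zero]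

theorem repChar_ne_zero_of_mem_center (hτ : RepIrreducible τ) (hc : c ∈ Subgroup.center G) :
    repChar τ c ≠ 0 := by
  intro h0
  have := hτ.nontrivial
  have h := hτ.eq_smul_one_of_mem_center hc
  rw [h0, zero_div, zero_smul] at h
  apply one_ne_zero (α := Module.End ℂ V)
  rw [← map_one τ, ← mul_inv_cancel c, map_mul, h, zero_mul]

end RepIrreducible

theorem mul_eq_one_of_sum_repChar_mul_ne_zero {G V W : Type*} [Group G] [Fintype G]
    [AddCommGroup V] [Module ℂ V] [AddCommGroup W] [Module ℂ W]
    {ρ : Representation ℂ G W} {τ : Representation ℂ G V} {c : G} {a b : ℂ}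
    (ha : ρ c = a • 1) (hb : τ c⁻¹ = b • 1)
    (hS : ∑ n, repChar ρ n * repChar τ n⁻¹ ≠ 0) :
    a * b = 1 := by
  refine mul_right_cancel₀ hS ?_
  calc a * b * ∑ n, repChar ρ n * repChar τ n⁻¹
      = ∑ n, repChar ρ (c * n) * repChar τ (c * n)⁻¹ := by
        simp only [mul_inv_rev, repChar_mul_of_eq_smul_one ha,
          repChar_mul_of_eq_smul_one' hb, Finset.mul_sum]
        ring_nf
    _ = 1 * ∑ n, repChar ρ n * repChar τ n⁻¹ := by
        rw [one_mul]
        exact Fintype.sum_equiv (Equiv.mulLeft c) _ _ fun _ => rfl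

open scoped commutatorElement

theorem commutatorElement_mem_center {E : Type*} [Group E]
    (hE : commutator E ≤ Subgroup.center E) (g x : E) : ⁅g, x⁆ ∈ Subgroup.center E :=
  hE (Subgroup.commutator_mem_commutator (Subgroup.mem_top g) (Subgroup.mem_top x))

section Subgroup

variable {E W : Type*} [Group E] [AddCommGroup W] [Module ℂ W] [FiniteDimensional ℂ W]
  {N : Subgroup E} {ρ : Representation ℂ N W}

theorem mem_center_of_coe_mem_center {c : N} (hc : (c : E) ∈ Subgroup.center E) :
    c ∈ Subgroup.center N :=
  Subgroup.mem_center_iff.mpr fun y => Subtype.ext (Subgroup.mem_center_iff.mp hc y)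

theorem eq_one_of_repChar_eq_of_mem_center {V : Type*} [AddCommGroup V] [Module ℂ V]
    [FiniteDimensional ℂ V] [Fintype N] {σ : Representation ℂ E V} (hσ : RepIrreducible σ)
    (hfaith : ∀ g, repChar σ g = repChar σ 1 → g = 1) (hρ : RepIrreducible ρ)
    (hS : ∑ n : N, repChar ρ n * repChar σ ((n⁻¹ : N) : E) ≠ 0)
    {c : N} (hc : (c : E) ∈ Subgroup.center E) (hc1 : repChar ρ c = repChar ρ 1) : c = 1 := by
  have ha := hρ.eq_smul_one_of_mem_center (mem_center_of_coe_mem_center hc)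
  rw [hc1, div_self hρ.repChar_one_ne_zero] at ha
  obtain ⟨b, hb⟩ := hσ.exists_eq_smul_one_of_commute (c := (c : E)⁻¹) fun g =>
    (Subgroup.mem_center_iff.mp (inv_mem hc) g).symm
  have hb1 : b = 1 := by
    simpa using mul_eq_one_of_sum_repChar_mul_ne_zero (τ := σ.comp N.subtype) ha hb hS
  have hc_inv : (c : E)⁻¹ = 1 :=
    hfaith _ (by rw [repChar, repChar, hb, hb1, one_smul, map_one σ])
  exact Subtype.ext (inv_eq_one.mp hc_inv)

variable [hN : N.Normal]

theorem commutatorElement_mem_of_normal (g : E) (x : N) : ⁅g, (x : E)⁆ ∈ N :=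
  N.mul_mem (hN.conj_mem _ x.2 g) (N.inv_mem x.2)

theorem conjHom_eq_commutatorElement_mul (g : E) (x : N) :
    conjHom N g x = ⟨⁅g, (x : E)⁆, commutatorElement_mem_of_normal g x⟩ * x := by
  ext
  simp [conjHom, commutatorElement_def]

theorem conjHom_mem_center (g : E) {c : N} (hc : c ∈ Subgroup.center N) :
    conjHom N g c ∈ Subgroup.center N := by
  rw [Subgroup.mem_center_iff] at hc ⊢
  intro y
  have hy : conjHom N g (conjHom N g⁻¹ y) = y := by
    ext
    simp [conjHom, mul_assoc]
  rw [← hy, ← map_mul, ← map_mul, hc]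

theorem repChar_conjHom (hE : commutator E ≤ Subgroup.center E) (hρ : RepIrreducible ρ)
    (g : E) (x : N) :
    repChar ρ (conjHom N g x) =
      repChar ρ ⟨⁅g, (x : E)⁆, commutatorElement_mem_of_normal g x⟩ / repChar ρ 1 *
        repChar ρ x := by
  rw [conjHom_eq_commutatorElement_mul]
  exact repChar_mul_of_eq_smul_one (hρ.eq_smul_one_of_mem_center
    (mem_center_of_coe_mem_center (commutatorElement_mem_center hE g x))) x

theorem commute_of_repChar_conjHom_eq (hE : commutator E ≤ Subgroup.center E)
    (hρ : RepIrreducible ρ)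
    (hsep : ∀ c : N, (c : E) ∈ Subgroup.center E → repChar ρ c = repChar ρ 1 → c = 1)
    {g : E} {x : N} (hx : repChar ρ x ≠ 0)
    (h : repChar ρ (conjHom N g x) = repChar ρ x) : Commute g x := by
  rw [repChar_conjHom hE hρ, mul_eq_right₀ hx, div_eq_one_iff_eq hρ.repChar_one_ne_zero] at h
  rw [← commutatorElement_eq_one_iff_commute]
  exact congrArg Subtype.val (hsep _ (commutatorElement_mem_center hE g x) h)

theorem mem_center_of_repChar_ne_zero (hE : commutator E ≤ Subgroup.center E)
    (hρ : RepIrreducible ρ)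
    (hsep : ∀ c : N, (c : E) ∈ Subgroup.center E → repChar ρ c = repChar ρ 1 → c = 1)
    {x : N} (hx : repChar ρ x ≠ 0) :
    x ∈ Subgroup.center N :=
  Subgroup.mem_center_iff.mpr fun n =>
    Subtype.ext (commute_of_repChar_conjHom_eq hE hρ hsep hx (repChar_conj ρ n x)).eq

theorem forall_repChar_conjHom_eq_iff_mem_centralizer (hE : commutator E ≤ Subgroup.center E)
    (hρ : RepIrreducible ρ)
    (hsep : ∀ c : N, (c : E) ∈ Subgroup.center E → repChar ρ c = repChar ρ 1 → c = 1)
    (g : E) :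
    (∀ x : N, repChar ρ (conjHom N g x) = repChar ρ x) ↔
      g ∈ Subgroup.centralizer ((Subgroup.center N).map N.subtype : Set E) := by
  refine ⟨fun h => Subgroup.mem_centralizer_iff.mpr ?_, fun h x => ?_⟩
  · rintro _ ⟨c, hc, rfl⟩
    exact (commute_of_repChar_conjHom_eq hE hρ hsep
      (hρ.repChar_ne_zero_of_mem_center hc) (h c)).symm.eq
  · by_cases hx : repChar ρ x = 0
    · rw [repChar_conjHom hE hρ, hx, mul_zero]
    · have hcomm : (x : E) * g = g * x := Subgroup.mem_centralizer_iff.mp h x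
        ⟨x, mem_center_of_repChar_ne_zero hE hρ hsep hx, rfl⟩
      congr 1
      ext
      simp [conjHom, ← hcomm]

theorem forall_conj_eq_iff_mem_centralizer (hE : commutator E ≤ Subgroup.center E)
    (hρ : RepIrreducible ρ)
    (hsep : ∀ c : N, (c : E) ∈ Subgroup.center E → repChar ρ c = repChar ρ 1 → c = 1)
    (φZ : (Subgroup.center N).map N.subtype →* ℂ)
    (hφZ : ∀ (z : (Subgroup.center N).map N.subtype) (hz : (z : E) ∈ N),
      repChar ρ ⟨z, hz⟩ = repChar ρ 1 * φZ z) (g : E) :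
    (∀ (z : (Subgroup.center N).map N.subtype)
        (h2 : g * (z : E) * g⁻¹ ∈ (Subgroup.center N).map N.subtype),
        φZ ⟨g * (z : E) * g⁻¹, h2⟩ = φZ z) ↔
      g ∈ Subgroup.centralizer ((Subgroup.center N).map N.subtype : Set E) := by
  refine ⟨fun h => Subgroup.mem_centralizer_iff.mpr ?_, fun h z _ => ?_⟩
  · rintro _ ⟨c, hc, rfl⟩
    have h2 : g * (c : E) * g⁻¹ ∈ (Subgroup.center N).map N.subtype :=
      ⟨_, conjHom_mem_center g hc, rfl⟩
    have hconj : repChar ρ (conjHom N g c) = repChar ρ c :=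
      (hφZ ⟨_, h2⟩ (hN.conj_mem _ c.2 g)).trans
        ((congrArg _ (h _ h2)).trans (hφZ ⟨c, c, hc, rfl⟩ c.2).symm)
    exact (commute_of_repChar_conjHom_eq hE hρ hsep
      (hρ.repChar_ne_zero_of_mem_center hc) hconj).symm.eq
  · congr 1
    ext
    simp [← Subgroup.mem_centralizer_iff.mp h z z.2]

end Subgroup

theorem inertia_chi_eq_inertia_linear_general
    {E V W : Type*} [Group E]
    [AddCommGroup V] [Module ℂ V] [FiniteDimensional ℂ V]
    [AddCommGroup W] [Module ℂ W] [FiniteDimensional ℂ W]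
    (hE : commutator E ≤ Subgroup.center E)
    (σ : Representation ℂ E V) (hσirr : RepIrreducible σ)
    (φ : E → ℂ) (hφ : φ = repChar σ)
    (hfaith : ∀ g : E, φ g = φ 1 → g = 1)
    (N : Subgroup E) [N.Normal] [Fintype ↥N]
    (ρ : Representation ℂ ↥N W) (hρirr : RepIrreducible ρ)
    (χ : ↥N → ℂ) (hχ : χ = repChar ρ)
    (hconst : (Fintype.card ↥N : ℂ)⁻¹ * ∑ n : ↥N, χ n * φ ((n⁻¹ : ↥N) : E) ≠ 0)
    (M : Subgroup E) (hM : M = (Subgroup.center ↥N).map N.subtype)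
    (φZ : ↥M →* ℂ)
    (hφZ : ∀ (z : ↥M) (hz : (z : E) ∈ N), χ ⟨(z : E), hz⟩ = χ 1 * φZ z) :
    ∀ g : E,
      ((∀ x : ↥N, χ (conjHom N g x) = χ x) ↔
        (∀ (z : ↥M) (h2 : g * (z : E) * g⁻¹ ∈ M), φZ ⟨g * (z : E) * g⁻¹, h2⟩ = φZ z)) ∧
      ((∀ x : ↥N, χ (conjHom N g x) = χ x) ↔ g ∈ Subgroup.centralizer (M : Set E)) := by
  subst hφ hχ hM
  have hsep : ∀ c : N, (c : E) ∈ Subgroup.center E → repChar ρ c = repChar ρ 1 → c = 1 :=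
    fun _ => eq_one_of_repChar_eq_of_mem_center hσirr hfaith hρirr (right_ne_zero_of_mul hconst)
  intro g
  have hχ := forall_repChar_conjHom_eq_iff_mem_centralizer hE hρirr hsep g
  exact ⟨hχ.trans (forall_conj_eq_iff_mem_centralizer hE hρirr hsep φZ hφZ g).symm, hχ⟩

/-- For `E` with `E' ⊆ Z(E)` and cyclic center, `φ ∈ Irr(E)` faithful,
`N ⊴ E`, and `χ` an irreducible constituent of `φ↓N`, the inertia group of `χ` equals
the inertia group of the linear character `φ_Z` of `Z(N)` with `χ↓Z(N) = χ(1)·φ_Z`,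
and both equal `C_E(Z(N))`. -/
theorem inertia_chi_eq_inertia_linear
    {E V W : Type*} [Group E] [Fintype E]
    [AddCommGroup V] [Module ℂ V] [FiniteDimensional ℂ V]
    [AddCommGroup W] [Module ℂ W] [FiniteDimensional ℂ W]
    (hE : commutator E ≤ Subgroup.center E)
    (hcyc : IsCyclic ↥(Subgroup.center E))
    (σ : Representation ℂ E V) (hσirr : RepIrreducible σ)
    (φ : E → ℂ) (hφ : φ = repChar σ)
    (hfaith : ∀ g : E, φ g = φ 1 → g = 1)
    (N : Subgroup E) [N.Normal] [Fintype ↥N]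
    (ρ : Representation ℂ ↥N W) (hρirr : RepIrreducible ρ)
    (χ : ↥N → ℂ) (hχ : χ = repChar ρ)
    (hconst : (Fintype.card ↥N : ℂ)⁻¹ * ∑ n : ↥N, χ n * φ ((n⁻¹ : ↥N) : E) ≠ 0)
    (M : Subgroup E) (hM : M = (Subgroup.center ↥N).map N.subtype)
    (φZ : ↥M →* ℂ)
    (hφZ : ∀ (z : ↥M) (hz : (z : E) ∈ N), χ ⟨(z : E), hz⟩ = χ 1 * φZ z) :
    ∀ g : E,
      ((∀ x : ↥N, χ (conjHom N g x) = χ x) ↔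
        (∀ (z : ↥M) (h2 : g * (z : E) * g⁻¹ ∈ M), φZ ⟨g * (z : E) * g⁻¹, h2⟩ = φZ z)) ∧
      ((∀ x : ↥N, χ (conjHom N g x) = χ x) ↔ g ∈ Subgroup.centralizer (M : Set E)) :=
  inertia_chi_eq_inertia_linear_general hE σ hσirr φ hφ hfaith N ρ hρirr χ hχ hconst M hM φZ hφZ
end

section
/- Let E be a finite group, ρ: E → GL(V) an irreducible unitary representation with character φ satisfying φ(1)² = [E : Z(E)], N ⊴ E, and χ an irreducible constituent of φ↓N with central idempotent e_χ on V. Writing Y = Z(E) ∩ N, the dimension of the image of e_χ equals |Y|·φ(1)·χ(1)² / |N|. -/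
/-!
An irreducible unitary `ρ` with `φ(1)² = [E : Z(E)]` has `|φ(z)| = φ(1)` on `Z(E)` (Schur), so the
central elements already account for all of `∑ |φ|² = |E|` and `φ` vanishes off `Z(E)`. Hence the
trace of `e_χ = χ(1)/|N| ∑ χ(n⁻¹) ρ(n)` is a sum over `Y = Z(E) ∩ N`. For `n ∈ Y`, Schur makes
`σ(n⁻¹)` and `ρ(n)` scalars, and their product is `1` because translating the nonzero pairing
`⟨χ, φ↓N⟩` by `n` multiplies it by that product. So every term is `χ(1) φ(1)`. Finally
`e_χ` is idempotent by the convolution identity `χ * χ = (|N|/χ(1)) χ`, so `dim im e_χ = tr e_χ`.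
-/
open scoped BigOperators

theorem repChar_one {G V : Type*} [Monoid G] [AddCommGroup V] [Module ℂ V]
    [FiniteDimensional ℂ V] (ρ : Representation ℂ G V) : repChar ρ 1 = Module.finrank ℂ V :=
  Representation.char_one ρ

theorem repChar_mul_of_eq_smul {G V : Type*} [Monoid G] [AddCommGroup V] [Module ℂ V]
    {ρ : Representation ℂ G V} {a : G} {c : ℂ} (h : ρ a = c • 1) (m : G) :
    repChar ρ (a * m) = c * repChar ρ m := by
  rw [repChar, repChar, map_mul, h, smul_mul_assoc, one_mul, map_smul, smul_eq_mul]

namespace RepIrreducible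

variable {G V : Type*} [AddCommGroup V] [Module ℂ V]

section Monoid

variable [Monoid G] {ρ : Representation ℂ G V}

theorem isIrreducible (h : RepIrreducible ρ) : ρ.IsIrreducible where
  exists_pair_ne := ⟨⊥, ⊤, fun hbt => h.1 (congrArg Subrepresentation.toSubmodule hbt).symm⟩
  eq_bot_or_eq_top U := (h.2 U.toSubmodule U.apply_mem_toSubmodule).imp
    (fun hU => Subrepresentation.toSubmodule_injective hU)
    (fun hU => Subrepresentation.toSubmodule_injective hU)

theorem nontrivial_s14 (h : RepIrreducible ρ) : Nontrivial V :=
  (subsingleton_or_nontrivial V).resolve_left fun _ => h.1 (Subsingleton.elim _ _)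

variable [FiniteDimensional ℂ V]

theorem repChar_one_ne_zero_s14 (h : RepIrreducible ρ) : repChar ρ 1 ≠ 0 := by
  have := h.nontrivial_s14
  rw [repChar_one]
  exact Nat.cast_ne_zero.mpr Module.finrank_pos.ne'

theorem exists_eq_smul_one_of_commute_s14 (h : RepIrreducible ρ) (T : Module.End ℂ V)
    (hT : ∀ g, T * ρ g = ρ g * T) : ∃ c : ℂ, T = c • 1 := by
  have := h.isIrreducible
  obtain ⟨c, hc⟩ :=
    Representation.IsIrreducible.algebraMap_intertwiningMap_bijective_of_isAlgClosed.2
      (T.intertwiningMap_of_isIntertwiningMap (ρ := ρ) (σ := ρ) fun g v => congrArg (· v) (hT g))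
  exact ⟨c, (congrArg Representation.IntertwiningMap.toLinearMap hc).symm⟩

end Monoid

variable [Group G] [FiniteDimensional ℂ V] {ρ : Representation ℂ G V}

theorem exists_eq_smul_one_of_mem_center (h : RepIrreducible ρ) {z : G}
    (hz : z ∈ Subgroup.center G) : ∃ c : ℂ, ρ z = c • 1 :=
  h.exists_eq_smul_one_of_commute_s14 (ρ z) fun g => by
    rw [← map_mul, ← map_mul, Subgroup.mem_center_iff.mp hz g]

theorem sum_repChar_mul_repChar_inv [Fintype G] (h : RepIrreducible ρ) :
    ∑ g, repChar ρ g * repChar ρ g⁻¹ = Fintype.card G := by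
  have := h.isIrreducible
  have : Invertible (Nat.card G : ℂ) := invertibleOfNonzero (by simp)
  have horth := Representation.char_orthonormal ρ ρ
  rw [if_pos ⟨.refl ρ⟩, inv_mul_eq_one₀ (by simp), Nat.card_eq_fintype_card] at horth
  exact horth.symm

end RepIrreducible

section CharIdempotent

variable {G V W : Type*} [Group G] [Fintype G] [AddCommGroup V] [Module ℂ V]
  [AddCommGroup W] [Module ℂ W] [FiniteDimensional ℂ W] {σ : Representation ℂ G W}

noncomputable def charIdempotent (χ : G → ℂ) (ρ : Representation ℂ G V) : Module.End ℂ V :=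
  (χ 1 / Fintype.card G) • ∑ k, χ k⁻¹ • ρ k

theorem RepIrreducible.sum_repChar_inv_smul (h : RepIrreducible σ) :
    ∑ k, repChar σ k⁻¹ • σ k = (Fintype.card G / repChar σ 1) • (1 : Module.End ℂ W) := by
  obtain ⟨c, hc⟩ := h.exists_eq_smul_one_of_commute_s14 (∑ k, repChar σ k⁻¹ • σ k) fun g => by
    rw [Finset.sum_mul, Finset.mul_sum]
    refine Fintype.sum_equiv (MulAut.conj g⁻¹).toEquiv _ _ fun k => ?_
    have hclass : repChar σ (g⁻¹ * k⁻¹ * g⁻¹⁻¹) = repChar σ k⁻¹ := σ.char_conj _ _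
    simp only [MulEquiv.toEquiv_eq_coe, MulEquiv.coe_toEquiv, MulAut.conj_apply, inv_inv,
      smul_mul_assoc, mul_smul_comm, ← map_mul]
    rw [show (g⁻¹ * k * g)⁻¹ = g⁻¹ * k⁻¹ * g⁻¹⁻¹ by group, hclass, ← mul_assoc, mul_inv_cancel_left]
  have htrace : c * repChar σ 1 = Fintype.card G := by
    rw [← h.sum_repChar_mul_repChar_inv, repChar_one, ← smul_eq_mul, ← LinearMap.trace_one,
      ← map_smul, ← hc, map_sum]
    refine Fintype.sum_congr _ _ fun k => ?_
    rw [map_smul, smul_eq_mul, mul_comm]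
    rfl
  rw [hc, ← htrace, mul_div_cancel_right₀ _ h.repChar_one_ne_zero_s14]

theorem RepIrreducible.sum_repChar_inv_mul_repChar_mul (h : RepIrreducible σ) (m : G) :
    ∑ k, repChar σ k⁻¹ * repChar σ (m * k) = Fintype.card G / repChar σ 1 * repChar σ m := by
  have := congrArg (fun T => LinearMap.trace ℂ W (σ m * T)) h.sum_repChar_inv_smul
  simp only [Finset.mul_sum, mul_smul_comm, map_sum, map_smul, smul_eq_mul, mul_one,
    ← map_mul] at this
  exact this

theorem RepIrreducible.isIdempotentElem_charIdempotent (h : RepIrreducible σ)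
    (ρ : Representation ℂ G V) : IsIdempotentElem (charIdempotent (repChar σ) ρ) := by
  set χ := repChar σ
  set T := ∑ k, χ k⁻¹ • ρ k
  have hsq : T * T = (Fintype.card G / χ 1) • T := calc
    T * T = ∑ k, ∑ m, (χ k⁻¹ * χ (m⁻¹ * k)) • ρ m := by
      rw [Finset.sum_mul]
      simp only [T, Finset.mul_sum, smul_mul_smul_comm, ← map_mul]
      refine Fintype.sum_congr _ _ fun k => Fintype.sum_equiv (Equiv.mulLeft k) _ _ fun l => ?_
      simp only [Equiv.coe_mulLeft, mul_inv_rev, inv_mul_cancel_right]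
    _ = ∑ m, (∑ k, χ k⁻¹ * χ (m⁻¹ * k)) • ρ m := by
      rw [Finset.sum_comm]
      simp only [Finset.sum_smul]
    _ = (Fintype.card G / χ 1) • T := by
      simp only [χ, h.sum_repChar_inv_mul_repChar_mul, T, Finset.smul_sum, smul_smul]
  rw [charIdempotent, IsIdempotentElem, smul_mul_smul_comm, hsq, smul_smul]
  congr 1
  field_simp [h.repChar_one_ne_zero_s14]

theorem trace_charIdempotent [FiniteDimensional ℂ V] (χ : G → ℂ) (ρ : Representation ℂ G V) :
    LinearMap.trace ℂ V (charIdempotent χ ρ) = χ 1 / Fintype.card G * ∑ k, χ k⁻¹ * repChar ρ k := by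
  simp only [charIdempotent, map_smul, map_sum, smul_eq_mul]
  rfl

end CharIdempotent

theorem Subgroup.sum_eq_card_inf_nsmul {G M : Type*} [Group G] [AddCommMonoid M]
    (H N : Subgroup G) [Fintype N] {f : N → M} {a : M} (hon : ∀ n : N, (n : G) ∈ H → f n = a)
    (hoff : ∀ n : N, (n : G) ∉ H → f n = 0) : ∑ n, f n = Nat.card ↥(H ⊓ N) • a := by
  classical
  have hcard : Nat.card ↥(H ⊓ N) = (Finset.univ.filter fun n : N => (n : G) ∈ H).card := by
    rw [← Nat.card_congr (Subgroup.subgroupOfEquivOfLe (inf_le_right : H ⊓ N ≤ N)).toEquiv,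
      Subgroup.inf_subgroupOf_right, ← Fintype.card_subtype, Nat.card_eq_fintype_card]
    rfl
  rw [← Finset.sum_filter_add_sum_filter_not Finset.univ fun n : N => (n : G) ∈ H,
    Finset.sum_congr rfl fun n hn => hon n (Finset.mem_filter.mp hn).2,
    Finset.sum_congr rfl fun n hn => hoff n (Finset.mem_filter.mp hn).2,
    Finset.sum_const, Finset.sum_const_zero, add_zero, hcard]

theorem mul_eq_one_of_sum_repChar_mul_repChar_inv_ne_zero {G V W : Type*} [Group G] [Fintype G]
    [AddCommGroup V] [Module ℂ V] [AddCommGroup W] [Module ℂ W]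
    {σ : Representation ℂ G W} {τ : Representation ℂ G V} {a : G} {c d : ℂ}
    (hc : σ a⁻¹ = c • 1) (hd : τ a = d • 1)
    (hS : ∑ m, repChar σ m * repChar τ m⁻¹ ≠ 0) : c * d = 1 := by
  refine (mul_eq_right₀ hS).mp ?_
  rw [Finset.mul_sum]
  refine Fintype.sum_equiv (Equiv.mulLeft a⁻¹) _ _ fun m => ?_
  have hτ : repChar τ (a⁻¹ * m)⁻¹ = repChar τ (a * m⁻¹) := by
    rw [mul_inv_rev, inv_inv]
    exact τ.char_mul_comm _ _
  rw [Equiv.coe_mulLeft, hτ, repChar_mul_of_eq_smul hc, repChar_mul_of_eq_smul hd]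
  ring

section Unitary

variable {G V : Type*} [NormedAddCommGroup V] [InnerProductSpace ℂ V]

theorem normSq_eq_one_of_unitary_of_eq_smul [Monoid G] [Nontrivial V] {ρ : Representation ℂ G V}
    (hunit : ∀ (g : G) (v w : V), inner ℂ (ρ g v) (ρ g w) = inner ℂ v w) {z : G} {c : ℂ}
    (hz : ρ z = c • 1) : Complex.normSq c = 1 := by
  obtain ⟨v, hv⟩ := exists_ne (0 : V)
  have hcc : starRingEnd ℂ c * c = 1 := by
    have := hunit z v v
    rw [hz, LinearMap.smul_apply, Module.End.one_apply, inner_smul_left, inner_smul_right,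
      ← mul_assoc] at this
    exact (mul_eq_right₀ (inner_self_ne_zero.mpr hv)).mp this
  exact_mod_cast Complex.normSq_eq_conj_mul_self.trans hcc

variable [FiniteDimensional ℂ V] [Group G] {ρ : Representation ℂ G V}
  (hunit : ∀ (g : G) (v w : V), inner ℂ (ρ g v) (ρ g w) = inner ℂ v w)
include hunit

theorem repChar_inv_eq_conj_of_unitary (g : G) :
    repChar ρ g⁻¹ = starRingEnd ℂ (repChar ρ g) := by
  let b := stdOrthonormalBasis ℂ V
  simp only [repChar, LinearMap.trace_eq_sum_inner _ b, map_sum]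
  refine Fintype.sum_congr _ _ fun i => ?_
  rw [← hunit g, ← Module.End.mul_apply, ← map_mul, mul_inv_cancel, map_one,
    Module.End.one_apply, inner_conj_symm]

theorem RepIrreducible.normSq_repChar_of_mem_center_of_unitary (h : RepIrreducible ρ) {z : G}
    (hz : z ∈ Subgroup.center G) : Complex.normSq (repChar ρ z) = Module.finrank ℂ V ^ 2 := by
  have := h.nontrivial_s14
  obtain ⟨c, hc⟩ := h.exists_eq_smul_one_of_mem_center hz
  rw [← mul_one z, repChar_mul_of_eq_smul hc, map_mul,
    normSq_eq_one_of_unitary_of_eq_smul hunit hc, repChar_one, Complex.normSq_natCast, one_mul, sq]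

variable [Fintype G]

theorem RepIrreducible.sum_normSq_repChar_of_unitary (h : RepIrreducible ρ) :
    ∑ g, Complex.normSq (repChar ρ g) = Fintype.card G := by
  have horth := h.sum_repChar_mul_repChar_inv
  simp only [repChar_inv_eq_conj_of_unitary hunit, Complex.mul_conj] at horth
  exact_mod_cast horth

theorem RepIrreducible.repChar_eq_zero_of_not_mem_center_of_unitary (h : RepIrreducible ρ)
    (hdeg : Module.finrank ℂ V ^ 2 = (Subgroup.center G).index) {g : G}
    (hg : g ∉ Subgroup.center G) : repChar ρ g = 0 := by
  classical
  have hsplit := Finset.sum_filter_add_sum_filter_not Finset.univ (· ∈ Subgroup.center G)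
    fun g => Complex.normSq (repChar ρ g)
  have hcenter : ∑ z ∈ Finset.univ.filter (· ∈ Subgroup.center G), Complex.normSq (repChar ρ z)
      = Fintype.card G := by
    rw [Finset.sum_congr rfl fun z hz =>
        h.normSq_repChar_of_mem_center_of_unitary hunit (Finset.mem_filter.mp hz).2,
      Finset.sum_const, nsmul_eq_mul, ← Fintype.card_subtype, ← Nat.card_eq_fintype_card]
    exact_mod_cast (hdeg ▸ (Subgroup.center G).card_mul_index).trans Nat.card_eq_fintype_card
  rw [h.sum_normSq_repChar_of_unitary hunit, hcenter, add_eq_left,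
    Finset.sum_eq_zero_iff_of_nonneg fun g _ => Complex.normSq_nonneg _] at hsplit
  exact Complex.normSq_eq_zero.mp (hsplit g (Finset.mem_filter.mpr ⟨Finset.mem_univ g, hg⟩))

end Unitary

theorem RepIrreducible.repChar_inv_mul_repChar_of_mem_center {E V W : Type*} [Group E]
    {N : Subgroup E} [Fintype N] [AddCommGroup V] [Module ℂ V] [FiniteDimensional ℂ V]
    [AddCommGroup W] [Module ℂ W] [FiniteDimensional ℂ W]
    {ρ : Representation ℂ E V} {σ : Representation ℂ N W} (hρ : RepIrreducible ρ)
    (hσ : RepIrreducible σ) (hS : ∑ m : N, repChar σ m * repChar ρ (m⁻¹ : N) ≠ 0) {n : N}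
    (hn : (n : E) ∈ Subgroup.center E) :
    repChar σ n⁻¹ * repChar (ρ.comp N.subtype) n = repChar σ 1 * repChar ρ 1 := by
  have hnN : n⁻¹ ∈ Subgroup.center N := inv_mem <|
    Subgroup.mem_center_iff.mpr fun m => Subtype.ext (Subgroup.mem_center_iff.mp hn m)
  obtain ⟨c, hc⟩ := hσ.exists_eq_smul_one_of_mem_center hnN
  obtain ⟨d, hd⟩ := hρ.exists_eq_smul_one_of_mem_center hn
  have hcd : c * d = 1 :=
    mul_eq_one_of_sum_repChar_mul_repChar_inv_ne_zero (τ := ρ.comp N.subtype) hc hd hS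
  have hσn : repChar σ n⁻¹ = c * repChar σ 1 := by simpa using repChar_mul_of_eq_smul hc 1
  have hρn : repChar ρ n = d * repChar ρ 1 := by simpa using repChar_mul_of_eq_smul hd 1
  change repChar σ n⁻¹ * repChar ρ n = _
  rw [hσn, hρn]
  linear_combination (repChar σ 1 * repChar ρ 1) * hcd

theorem dim_image_idempotent_formula_general
    {E V W : Type*} [Group E] [Fintype E]
    [NormedAddCommGroup V] [InnerProductSpace ℂ V] [FiniteDimensional ℂ V]
    [AddCommGroup W] [Module ℂ W] [FiniteDimensional ℂ W]
    (ρ : Representation ℂ E V) (hρirr : RepIrreducible ρ)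
    (hunit : ∀ (g : E) (v w : V), (inner ℂ (ρ g v) (ρ g w) : ℂ) = inner ℂ v w)
    (φ : E → ℂ) (hφ : φ = repChar ρ)
    (hdeg : φ 1 * φ 1 = ((Subgroup.center E).index : ℂ))
    (N : Subgroup E) [Fintype ↥N]
    (σ : Representation ℂ ↥N W) (hσirr : RepIrreducible σ)
    (χ : ↥N → ℂ) (hχ : χ = repChar σ)
    (hconst : (Fintype.card ↥N : ℂ)⁻¹ * ∑ n : ↥N, χ n * φ ((n⁻¹ : ↥N) : E) ≠ 0)
    (e : V →ₗ[ℂ] V)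
    (he : e = (χ 1 / (Fintype.card ↥N : ℂ)) • ∑ n : ↥N, χ n⁻¹ • (ρ (n : E) : V →ₗ[ℂ] V)) :
    (Module.finrank ℂ (LinearMap.range e) : ℂ) =
      (Nat.card ↥(Subgroup.center E ⊓ N) : ℂ) * φ 1 * (χ 1) ^ 2 / (Fintype.card ↥N : ℂ) := by
  subst hφ hχ
  replace he : e = charIdempotent (repChar σ) (ρ.comp N.subtype) := he
  subst he
  have hS := right_ne_zero_of_mul hconst
  have hdeg' : Module.finrank ℂ V ^ 2 = (Subgroup.center E).index := by
    rw [repChar_one] at hdeg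
    exact_mod_cast (sq _).trans hdeg
  have hsum : ∑ n : N, repChar σ n⁻¹ * repChar (ρ.comp N.subtype) n
      = Nat.card ↥(Subgroup.center E ⊓ N) • (repChar σ 1 * repChar ρ 1) :=
    (Subgroup.center E).sum_eq_card_inf_nsmul N
      (fun n hn => hρirr.repChar_inv_mul_repChar_of_mem_center hσirr hS hn)
      (fun n hn => mul_eq_zero_of_right _
        (hρirr.repChar_eq_zero_of_not_mem_center_of_unitary hunit hdeg' hn))
  have hproj := (LinearMap.isProj_range_iff_isIdempotentElem _).mpr
    (hσirr.isIdempotentElem_charIdempotent (ρ.comp N.subtype))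
  rw [← hproj.trace, trace_charIdempotent, hsum, nsmul_eq_mul]
  ring

/-- For an irreducible unitary representation `ρ` of `E` with
`φ(1)² = [E:Z(E)]`, `N ⊴ E`, and `χ` an irreducible constituent of `φ↓N`, the
dimension of the image of `e_χ` is `|Y|·φ(1)·χ(1)²/|N|`, where `Y = Z(E) ∩ N`. -/
theorem dim_image_idempotent_formula
    {E V W : Type*} [Group E] [Fintype E]
    [NormedAddCommGroup V] [InnerProductSpace ℂ V] [FiniteDimensional ℂ V]
    [AddCommGroup W] [Module ℂ W] [FiniteDimensional ℂ W]
    (ρ : Representation ℂ E V) (hρirr : RepIrreducible ρ)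
    (hunit : ∀ (g : E) (v w : V), (inner ℂ (ρ g v) (ρ g w) : ℂ) = inner ℂ v w)
    (φ : E → ℂ) (hφ : φ = repChar ρ)
    (hdeg : φ 1 * φ 1 = ((Subgroup.center E).index : ℂ))
    (N : Subgroup E) [N.Normal] [Fintype ↥N]
    (σ : Representation ℂ ↥N W) (hσirr : RepIrreducible σ)
    (χ : ↥N → ℂ) (hχ : χ = repChar σ)
    (hconst : (Fintype.card ↥N : ℂ)⁻¹ * ∑ n : ↥N, χ n * φ ((n⁻¹ : ↥N) : E) ≠ 0)
    (e : V →ₗ[ℂ] V)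
    (he : e = (χ 1 / (Fintype.card ↥N : ℂ)) • ∑ n : ↥N, χ n⁻¹ • (ρ (n : E) : V →ₗ[ℂ] V)) :
    (Module.finrank ℂ (LinearMap.range e) : ℂ) =
      (Nat.card ↥(Subgroup.center E ⊓ N) : ℂ) * φ 1 * (χ 1) ^ 2 / (Fintype.card ↥N : ℂ) :=
  dim_image_idempotent_formula_general ρ hρirr hunit φ hφ hdeg N σ hσirr χ hχ hconst e he
end
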